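/- arXiv:1411.6862 — 7 statements merged into one kernel-verified Lean document; each statement's English description precedes it below -/
import Mathlib

section
/- Let l be an odd prime, let q be an integer not divisible by l, and suppose that the multiplicative order e of −q modulo l is odd. Then for all integers a ≥ 1 and d ≥ 1, if l^a divides q^{2d} − 1 then l^a divides (−q)^d − 1. -/
/-- Let `l` be an odd prime, `q` an integer not divisible by `l`, and
suppose the multiplicative order of `-q` modulo `l` is odd.  Then for all integers
`a ≥ 1` and `d ≥ 1`, if `l^a ∣ q^(2d) - 1` then `l^a ∣ (-q)^d - 1`. -/
theorem pow_dvd_q_sq_sub_one_imp_pow_dvd_neg_q_sub_one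
    (l : ℕ) (hl : l.Prime) (hlodd : Odd l) (q : ℤ) (hq : ¬ (l : ℤ) ∣ q)
    (he : Odd (orderOf ((-q : ℤ) : ZMod l))) :
    ∀ a d : ℕ, 1 ≤ a → 1 ≤ d →
      (l : ℤ) ^ a ∣ q ^ (2 * d) - 1 → (l : ℤ) ^ a ∣ (-q) ^ d - 1 := by
  intro a d ha hd hdvd
  have hlP : Prime ((l : ℤ)) := Nat.prime_iff_prime_int.mp hl
  have h1 : (-q : ℤ) ^ (2 * d) = q ^ (2 * d) := by
    rw [pow_mul, pow_mul, neg_sq]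
  have hfac : ((-q : ℤ) ^ d - 1) * ((-q) ^ d + 1) = q ^ (2 * d) - 1 := by
    have h2 : ((-q : ℤ) ^ d - 1) * ((-q) ^ d + 1) = ((-q) ^ d) ^ 2 - 1 := by ring
    rw [h2, ← pow_mul, mul_comm d 2, h1]
  -- l does not divide (-q)^d + 1
  have hx : ((-q : ℤ) : ZMod l) ^ (2 * d) = 1 := by
    have hdl : (l : ℤ) ∣ q ^ (2 * d) - 1 :=
      dvd_trans (dvd_pow_self (l : ℤ) (Nat.one_le_iff_ne_zero.mp ha)) hdvd
    have h := (ZMod.intCast_zmod_eq_zero_iff_dvd (q ^ (2 * d) - 1) l).mpr hdl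
    push_cast at h ⊢
    rw [Even.neg_pow (even_two_mul d)]
    linear_combination h
  have horder : orderOf ((-q : ℤ) : ZMod l) ∣ 2 * d := orderOf_dvd_of_pow_eq_one hx
  have hed : orderOf ((-q : ℤ) : ZMod l) ∣ d := by
    have hcop : Nat.Coprime (orderOf ((-q : ℤ) : ZMod l)) 2 :=
      Nat.Coprime.symm (Nat.coprime_two_left.mpr he)
    exact (Nat.Coprime.dvd_of_dvd_mul_left hcop horder)
  have hxd : ((-q : ℤ) : ZMod l) ^ d = 1 := orderOf_dvd_iff_pow_eq_one.mp hed
  have hndvd : ¬ (l : ℤ) ∣ ((-q : ℤ) ^ d + 1) := by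
    intro hcon
    have h0 : (((-q : ℤ) ^ d + 1 : ℤ) : ZMod l) = 0 :=
      (ZMod.intCast_zmod_eq_zero_iff_dvd _ l).mpr hcon
    push_cast at h0
    push_cast at hxd
    rw [hxd] at h0
    have h2 : ((2 : ℤ) : ZMod l) = 0 := by push_cast; linear_combination h0
    have : (l : ℤ) ∣ 2 := (ZMod.intCast_zmod_eq_zero_iff_dvd _ l).mp h2
    have : l ∣ 2 := by exact_mod_cast this
    have hl2 : l = 2 := (Nat.prime_dvd_prime_iff_eq hl Nat.prime_two).mp this
    rw [hl2] at hlodd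
    exact (by decide : ¬ Odd 2) hlodd
  have hcop : IsCoprime ((l : ℤ) ^ a) ((-q : ℤ) ^ d + 1) :=
    IsCoprime.pow_left ((hlP.coprime_iff_not_dvd).mpr hndvd)
  exact hcop.dvd_of_dvd_mul_right (hfac ▸ hdvd)
end

section
/- Let l be an odd prime, let q ≥ 2 be an integer not divisible by l, and suppose that the multiplicative order e of −q modulo l is odd. Then for every n ≥ 1, the l-adic valuation of ∏_{i=1}^{n} (q^{2i} − 1) equals the l-adic valuation of ∏_{i=1}^{n} (q^{i} − (−1)^{i}). (These products are, up to the power of q, the orders of GL_n(q²) = q^{n(n−1)} ∏_{i=1}^{n}(q^{2i}−1) and of U_n(q) = q^{n(n−1)/2} ∏_{i=1}^{n}(q^i−(−1)^i); hence |GL_n(q²)| and |U_n(q)| have the same l-part.) -/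
/-! Over `ℤ`, `q^(2i) - 1 = (q^i - (-1)^i)(q^i + (-1)^i)`, so it suffices that `l` divides no
`q^i + (-1)^i`. Such a divisibility means `(-q)^i = -1` in `ZMod l`; then the order of `-q`
divides `2i`, being odd it divides `i`, so `(-q)^i = 1` and `-1 = 1` in `ZMod l`, impossible
for `l > 2`. -/

theorem pow_two_mul_sub_one_eq {R : Type*} [CommRing R] (a : R) (i : ℕ) :
    a ^ (2 * i) - 1 = (a ^ i - (-1) ^ i) * (a ^ i + (-1) ^ i) := by
  have h : ((-1 : R) ^ i) ^ 2 = 1 := by rw [← pow_mul, pow_mul', neg_one_sq, one_pow]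
  rw [pow_mul']
  linear_combination h

theorem pow_ne_neg_one_of_odd_orderOf {M : Type*} [Monoid M] [HasDistribNeg M] {x : M}
    (hx : Odd (orderOf x)) (hM : (-1 : M) ≠ 1) (i : ℕ) : x ^ i ≠ -1 := by
  intro h
  have hsq : x ^ (i * 2) = 1 := by rw [pow_mul, h, neg_one_sq]
  have hdvd : orderOf x ∣ i :=
    hx.coprime_two_right.dvd_of_dvd_mul_right (orderOf_dvd_of_pow_eq_one hsq)
  exact hM (h.symm.trans (orderOf_dvd_iff_pow_eq_one.mp hdvd))

theorem pow_add_neg_one_pow_ne_zero {R : Type*} [CommRing R] {a : R}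
    (ha : Odd (orderOf (-a))) (hR : (-1 : R) ≠ 1) (i : ℕ) : a ^ i + (-1) ^ i ≠ 0 := by
  intro h
  apply pow_ne_neg_one_of_odd_orderOf ha hR i
  rw [neg_pow, eq_neg_of_add_eq_zero_left h, mul_neg, ← pow_add, ← two_mul, pow_mul, neg_one_sq,
    one_pow]

theorem not_intCast_dvd_pow_add_neg_one_pow {l : ℕ} (hl : 2 < l) {q : ℤ}
    (he : Odd (orderOf ((-q : ℤ) : ZMod l))) (i : ℕ) : ¬ (l : ℤ) ∣ q ^ i + (-1) ^ i := by
  have : Fact (2 < l) := ⟨hl⟩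
  rw [← ZMod.intCast_zmod_eq_zero_iff_dvd]
  push_cast at he ⊢
  exact pow_add_neg_one_pow_ne_zero he ZMod.neg_one_ne_one i

theorem padicValInt_mul_of_not_dvd_right {p : ℕ} [Fact p.Prime] (a : ℤ) {b : ℤ}
    (hb : ¬ (p : ℤ) ∣ b) : padicValInt p (a * b) = padicValInt p a := by
  rcases eq_or_ne a 0 with rfl | ha
  · simp
  rw [padicValInt.mul ha (by rintro rfl; exact hb (dvd_zero _)),
    padicValInt.eq_zero_of_not_dvd hb, add_zero]

theorem padicValInt_order_GL_eq_padicValInt_order_U_general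
    (l : ℕ) (hl : l.Prime) (hlodd : Odd l) (q : ℤ)
    (he : Odd (orderOf ((-q : ℤ) : ZMod l))) :
    ∀ n : ℕ, 1 ≤ n →
      padicValInt l (∏ i ∈ Finset.Icc 1 n, (q ^ (2 * i) - 1)) =
        padicValInt l (∏ i ∈ Finset.Icc 1 n, (q ^ i - (-1) ^ i)) := by
  have : Fact l.Prime := ⟨hl⟩
  intro n _
  have hl2 : 2 < l := hl.odd_iff.mp hlodd
  have hfactor : ∏ i ∈ Finset.Icc 1 n, (q ^ (2 * i) - 1) =
      (∏ i ∈ Finset.Icc 1 n, (q ^ i - (-1) ^ i)) * ∏ i ∈ Finset.Icc 1 n, (q ^ i + (-1) ^ i) := by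
    rw [← Finset.prod_mul_distrib]
    exact Finset.prod_congr rfl fun i _ => pow_two_mul_sub_one_eq q i
  rw [hfactor, padicValInt_mul_of_not_dvd_right]
  exact (Nat.prime_iff_prime_int.mp hl).not_dvd_finsetProd fun i _ =>
    not_intCast_dvd_pow_add_neg_one_pow hl2 he i

/-- Let `l` be an odd prime, `q ≥ 2` an integer not divisible by `l`,
and suppose the multiplicative order of `-q` modulo `l` is odd.  Then for every `n ≥ 1`,
the `l`-adic valuation of `∏_{i=1}^{n} (q^(2i) - 1)` equals the `l`-adic valuation of
`∏_{i=1}^{n} (q^i - (-1)^i)`.  (These products are, up to the power of `q`, the orders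
of `GL_n(q²)` and of `U_n(q)`; hence `|GL_n(q²)|` and `|U_n(q)|` have the same `l`-part.) -/
theorem padicValInt_order_GL_eq_padicValInt_order_U
    (l : ℕ) (hl : l.Prime) (hlodd : Odd l) (q : ℤ) (hq2 : 2 ≤ q) (hq : ¬ (l : ℤ) ∣ q)
    (he : Odd (orderOf ((-q : ℤ) : ZMod l))) :
    ∀ n : ℕ, 1 ≤ n →
      padicValInt l (∏ i ∈ Finset.Icc 1 n, (q ^ (2 * i) - 1)) =
        padicValInt l (∏ i ∈ Finset.Icc 1 n, (q ^ i - (-1) ^ i)) :=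
  padicValInt_order_GL_eq_padicValInt_order_U_general l hl hlodd q he
end

section
/- Let e ≥ 1, 1 ≤ a ≤ e, r ≥ 1, and let λ be a partition with λ_{r−1} ≥ λ_r + a if r > 1 and with λ_i = λ_r for all r < i ≤ r + e − a. Let μ be the partition obtained from λ by adding a straight e-hook with arm length a − 1 at row r, i.e. μ_r = λ_r + a, μ_i = λ_i + 1 for r < i ≤ r + e − a, and μ_i = λ_i otherwise. Then d_μ − d_λ = (r − a)·e + e(e−1)/2 + a(a−1)/2 (an identity of integers). -/
/-- `f` encodes a partition `λ` via its parts `λ_i = f i` for `i ≥ 1` (and `f 0 = 0`):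
the parts are weakly decreasing and eventually zero. -/
def IsPartition (f : ℕ → ℕ) : Prop :=
  f 0 = 0 ∧ (∀ i, 1 ≤ i → f (i + 1) ≤ f i) ∧ ∃ N, ∀ i, N ≤ i → f i = 0

/-- The conjugate partition: `conjP f j = #{i ≥ 1 | f i ≥ j}`. -/
noncomputable def conjP (f : ℕ → ℕ) (j : ℕ) : ℕ :=
  Set.ncard {i : ℕ | 1 ≤ i ∧ j ≤ f i}

/-- The size `|λ| = Σ_i λ_i` of the partition. -/
noncomputable def wtP (f : ℕ → ℕ) : ℕ := ∑ᶠ i, f i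

/-- `d_λ = Σ_i (λ'_i)² − Σ_i i·λ_i`. -/
noncomputable def dP (f : ℕ → ℕ) : ℤ :=
  (∑ᶠ i : ℕ, (conjP f i : ℤ) ^ 2) - ∑ᶠ i : ℕ, (i : ℤ) * (f i : ℤ)

/-- The multiset of hook lengths of the partition: for each cell `(i,j)` of the Young
diagram (`1 ≤ i`, `1 ≤ j ≤ λ_i`) the hook length `λ_i − j + λ'_j − i + 1`. -/
noncomputable def hooksP (f : ℕ → ℕ) : Multiset ℤ :=
  (((Finset.Icc 1 (conjP f 1)) ×ˢ (Finset.Icc 1 (f 1))).filter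
      (fun p => p.2 ≤ f p.1)).val.map
    (fun p => (f p.1 : ℤ) - (p.2 : ℤ) + (conjP f p.2 : ℤ) - (p.1 : ℤ) + 1)

/-! Since the parts decrease, for `i, j ≥ 1` we have `i ≤ λ'_j ↔ j ≤ λ_i`, so
`λ'_j² = Σ_{i ≤ λ'_j} (2i - 1)`, and exchanging the order of summation gives
`Σ_j λ'_j² = Σ_i (2i - 1) λ_i`. Hence `d_λ = Σ_i (i - 1) λ_i` is linear in `λ`, and adding the
hook changes it by `(r - 1) a + Σ_{i = r+1}^{r+e-a} (i - 1)`, which is the claimed value. -/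

open Finset Function

-- Junk value: `{i | 1 ≤ i}` is infinite, and `Set.ncard` is `0` on infinite sets.
lemma conjP_zero (f : ℕ → ℕ) : conjP f 0 = 0 := by
  simp only [conjP, zero_le, and_true]
  exact (Set.Ici_infinite 1).ncard

lemma sum_Icc_two_mul_sub_one (n : ℕ) : ∑ i ∈ Icc 1 n, (2 * (i : ℤ) - 1) = n ^ 2 := by
  induction n with
  | zero => simp
  | succ n ih => rw [sum_Icc_succ_top (by omega), ih]; push_cast; ring

namespace IsPartition

variable {f : ℕ → ℕ}

lemma antitoneOn (hf : IsPartition f) : AntitoneOn f {i | 1 ≤ i} :=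
  antitoneOn_nat_Ici_of_succ_le hf.2.1

lemma support_mul_subset_Ico (hf : IsPartition f) {N : ℕ} (hN : ∀ i, N ≤ i → f i = 0)
    (φ : ℕ → ℤ) : support (fun i => φ i * (f i : ℤ)) ⊆ Set.Ico 1 N := by
  intro i hi
  have hfi : f i ≠ 0 := Nat.cast_ne_zero.1 (right_ne_zero_of_mul hi)
  have : i ≠ 0 := by rintro rfl; exact hfi hf.1
  have : ¬ N ≤ i := fun h => hfi (hN i h)
  simp only [Set.mem_Ico]
  omega

theorem le_conjP_iff (hf : IsPartition f) {i j : ℕ} (hi : 1 ≤ i) (hj : 1 ≤ j) :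
    i ≤ conjP f j ↔ j ≤ f i := by
  obtain ⟨N, hN⟩ := hf.2.2
  constructor
  · intro h
    by_contra! hlt
    have hsub : {k | 1 ≤ k ∧ j ≤ f k} ⊆ Set.Ico 1 i := fun k ⟨hk1, hk⟩ =>
      ⟨hk1, not_le.1 fun hik => by have := hf.antitoneOn hi hk1 hik; omega⟩
    have := Set.ncard_le_ncard hsub (Set.finite_Ico _ _)
    rw [Set.ncard_Ico_nat] at this
    unfold conjP at h
    omega
  · intro h
    have hfin : {k | 1 ≤ k ∧ j ≤ f k}.Finite := (Set.finite_Iio N).subset fun k ⟨_, hk⟩ =>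
      not_le.1 fun hNk => by rw [hN k hNk] at hk; omega
    have hsub : Set.Icc 1 i ⊆ {k | 1 ≤ k ∧ j ≤ f k} := fun k ⟨hk1, hki⟩ =>
      ⟨hk1, h.trans (hf.antitoneOn hk1 hi hki)⟩
    simpa [conjP] using Set.ncard_le_ncard hsub hfin

lemma support_conjP_subset (hf : IsPartition f) : support (conjP f) ⊆ Set.Icc 1 (f 1) := by
  intro j hj
  have hj1 : 1 ≤ j := Nat.one_le_iff_ne_zero.2 fun h => hj (h ▸ conjP_zero f)
  exact ⟨hj1, (hf.le_conjP_iff le_rfl hj1).1 (Nat.one_le_iff_ne_zero.2 hj)⟩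

theorem sum_sq_conjP (hf : IsPartition f) {N : ℕ} (hN : ∀ i, N ≤ i → f i = 0) :
    ∑ j ∈ Icc 1 (f 1), (conjP f j : ℤ) ^ 2 = ∑ i ∈ Ico 1 N, (2 * (i : ℤ) - 1) * f i := by
  calc ∑ j ∈ Icc 1 (f 1), (conjP f j : ℤ) ^ 2
      = ∑ j ∈ Icc 1 (f 1), ∑ i ∈ Icc 1 (conjP f j), (2 * (i : ℤ) - 1) := by
        simp only [sum_Icc_two_mul_sub_one]
    _ = ∑ i ∈ Ico 1 N, ∑ j ∈ Icc 1 (f i), (2 * (i : ℤ) - 1) := by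
        refine sum_comm' fun j i => ?_
        simp only [mem_Icc, mem_Ico]
        constructor
        · rintro ⟨⟨hj1, -⟩, hi1, hij⟩
          have hji := (hf.le_conjP_iff hi1 hj1).1 hij
          have hiN : i < N := not_le.1 fun h => by rw [hN i h] at hji; omega
          exact ⟨⟨hj1, hji⟩, hi1, hiN⟩
        · rintro ⟨⟨hj1, hji⟩, hi1, -⟩
          exact ⟨⟨hj1, hji.trans (hf.antitoneOn Set.self_mem_Ici hi1 hi1)⟩, hi1,
            (hf.le_conjP_iff hi1 hj1).2 hji⟩
    _ = ∑ i ∈ Ico 1 N, (2 * (i : ℤ) - 1) * f i := by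
        simp only [sum_const, Nat.card_Icc, add_tsub_cancel_right, nsmul_eq_mul, mul_comm]

theorem dP_eq_finsum (hf : IsPartition f) : dP f = ∑ᶠ i : ℕ, ((i : ℤ) - 1) * f i := by
  obtain ⟨N, hN⟩ := hf.2.2
  have hfinsum (φ : ℕ → ℤ) : ∑ᶠ i, φ i * (f i : ℤ) = ∑ i ∈ Ico 1 N, φ i * f i :=
    finsum_eq_sum_of_support_subset _ (coe_Ico 1 N ▸ hf.support_mul_subset_Ico hN φ)
  have hconj : ∑ᶠ j, (conjP f j : ℤ) ^ 2 = ∑ j ∈ Icc 1 (f 1), (conjP f j : ℤ) ^ 2 := by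
    refine finsum_eq_sum_of_support_subset _ fun j hj => ?_
    rw [coe_Icc]
    exact hf.support_conjP_subset fun h => hj (by simp [h])
  rw [dP, hconj, hf.sum_sq_conjP hN, hfinsum, hfinsum, ← sum_sub_distrib]
  exact sum_congr rfl fun i _ => by ring

theorem dP_sub_dP {g : ℕ → ℕ} (hf : IsPartition f) (hg : IsPartition g) :
    dP g - dP f = ∑ᶠ i : ℕ, ((i : ℤ) - 1) * ((g i : ℤ) - f i) := by
  obtain ⟨N, hN⟩ := hf.2.2
  obtain ⟨M, hM⟩ := hg.2.2
  rw [hf.dP_eq_finsum, hg.dP_eq_finsum, ← finsum_sub_distrib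
    ((Set.finite_Ico 1 M).subset (hg.support_mul_subset_Ico hM _))
    ((Set.finite_Ico 1 N).subset (hf.support_mul_subset_Ico hN _))]
  simp only [mul_sub]

end IsPartition

def addStraightHook (f : ℕ → ℕ) (r a m i : ℕ) : ℕ :=
  if i = r then f r + a else if r < i ∧ i ≤ r + m then f i + 1 else f i

section addStraightHook

variable {f : ℕ → ℕ} {r a : ℕ}

theorem IsPartition.addStraightHook (hf : IsPartition f) (m : ℕ) (hr : 1 ≤ r) (ha : 1 ≤ a)
    (hcorner : 1 < r → f r + a ≤ f (r - 1)) : IsPartition (addStraightHook f r a m) := by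
  obtain ⟨hf0, hdec, N, hN⟩ := hf
  refine ⟨?_, fun i hi => ?_, max N (r + m + 1), fun i hi => ?_⟩
  · simp only [_root_.addStraightHook, hf0]
    split_ifs <;> omega
  · have hfi := hdec i hi
    rcases eq_or_ne (i + 1) r with rfl | hir
    · have hcorner' := hcorner (by omega)
      rw [add_tsub_cancel_right] at hcorner'
      unfold _root_.addStraightHook
      split_ifs <;> omega
    · unfold _root_.addStraightHook
      split_ifs <;> subst_vars <;> omega
  · have hfi := hN i (le_of_max_le_left hi)
    unfold _root_.addStraightHook
    split_ifs <;> omega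

lemma sub_one_mul_addStraightHook_sub (f : ℕ → ℕ) (r a m i : ℕ) :
    ((i : ℤ) - 1) * ((addStraightHook f r a m i : ℤ) - f i) =
      if i = r then ((r : ℤ) - 1) * a else if i ∈ Ioc r (r + m) then (i : ℤ) - 1 else 0 := by
  simp only [addStraightHook, mem_Ioc]
  split_ifs <;> subst_vars <;> push_cast <;> ring

theorem dP_addStraightHook_sub (hf : IsPartition f) (m : ℕ) (hr : 1 ≤ r) (ha : 1 ≤ a)
    (hcorner : 1 < r → f r + a ≤ f (r - 1)) :
    dP (addStraightHook f r a m) - dP f =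
      ((r : ℤ) - 1) * a + ∑ i ∈ Ioc r (r + m), ((i : ℤ) - 1) := by
  have hsupp : support (fun i : ℕ => ((i : ℤ) - 1) * ((addStraightHook f r a m i : ℤ) - f i)) ⊆
      Icc r (r + m) := by
    intro i hi
    rw [mem_support, sub_one_mul_addStraightHook_sub] at hi
    rw [coe_Icc, Set.mem_Icc]
    split_ifs at hi with h1 h2
    · omega
    · rw [mem_Ioc] at h2; omega
    · exact absurd rfl hi
  rw [hf.dP_sub_dP (hf.addStraightHook m hr ha hcorner), finsum_eq_sum_of_support_subset _ hsupp,
    Icc_eq_cons_Ioc (by omega), sum_cons, sub_one_mul_addStraightHook_sub, if_pos rfl]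
  refine congrArg _ (sum_congr rfl fun i hi => ?_)
  rw [sub_one_mul_addStraightHook_sub, if_neg (mem_Ioc.1 hi).1.ne', if_pos hi]

end addStraightHook

lemma two_mul_sum_Ioc_sub_one (r m : ℕ) :
    2 * ∑ i ∈ Ioc r (r + m), ((i : ℤ) - 1) = m * (2 * r + m - 1) := by
  induction m with
  | zero => simp
  | succ m ih => rw [← add_assoc, sum_Ioc_succ_top (by omega), mul_add, ih]; push_cast; ring

theorem dP_add_straight_hook_general
    (e a r : ℕ) (ha1 : 1 ≤ a) (hae : a ≤ e) (hr : 1 ≤ r)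
    (f : ℕ → ℕ) (hf : IsPartition f)
    (hcorner : 1 < r → f r + a ≤ f (r - 1))
    (g : ℕ → ℕ)
    (hg : ∀ i, g i = if i = r then f r + a
      else if r < i ∧ i ≤ r + e - a then f i + 1 else f i) :
    dP g - dP f =
      ((r : ℤ) - (a : ℤ)) * (e : ℤ) + (e : ℤ) * ((e : ℤ) - 1) / 2 +
        (a : ℤ) * ((a : ℤ) - 1) / 2 := by
  obtain ⟨m, rfl⟩ := Nat.exists_eq_add_of_le hae
  obtain rfl : g = addStraightHook f r a m := by
    funext i
    rw [hg, addStraightHook, Nat.add_sub_assoc hae, add_tsub_cancel_left]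
  have hS := two_mul_sum_Ioc_sub_one r m
  have hE := Int.two_mul_ediv_two_of_even (Int.even_mul_pred_self ((a + m : ℕ) : ℤ))
  have hA := Int.two_mul_ediv_two_of_even (Int.even_mul_pred_self (a : ℤ))
  rw [dP_addStraightHook_sub hf m hr ha1 hcorner]
  push_cast at hE ⊢
  linarith

/-- Adding a straight `e`-hook with arm length `a − 1` at row `r`
changes `d_λ` by `(r − a)·e + e(e−1)/2 + a(a−1)/2`. -/
theorem dP_add_straight_hook
    (e a r : ℕ) (he : 1 ≤ e) (ha1 : 1 ≤ a) (hae : a ≤ e) (hr : 1 ≤ r)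
    (f : ℕ → ℕ) (hf : IsPartition f)
    (hcorner : 1 < r → f r + a ≤ f (r - 1))
    (hflat : ∀ i, r < i → i ≤ r + e - a → f i = f r)
    (g : ℕ → ℕ)
    (hg : ∀ i, g i = if i = r then f r + a
      else if r < i ∧ i ≤ r + e - a then f i + 1 else f i) :
    dP g - dP f =
      ((r : ℤ) - (a : ℤ)) * (e : ℤ) + (e : ℤ) * ((e : ℤ) - 1) / 2 +
        (a : ℤ) * ((a : ℤ) - 1) / 2 :=
  dP_add_straight_hook_general e a r ha1 hae hr f hf hcorner g hg
end

section
/- Let e ≥ 1, 1 ≤ a ≤ e, r ≥ 1, and let λ be a partition with λ_{r−1} ≥ λ_r + a if r > 1 and with λ_i = λ_r for all r < i ≤ r + e − a. Let c := λ_r + 1 and let μ be the partition with μ_r = λ_r + a, μ_i = λ_i + 1 for r < i ≤ r + e − a, and μ_i = λ_i otherwise. Then there is an equality of multisets of integers: hooks(μ) + {λ_i − c + r − a − i + 1 : 1 ≤ i ≤ r−1} + {λ'_j − r + c − e + a − j : 1 ≤ j ≤ c−1} = hooks(λ) + {λ_i − c + r + e − a − i + 1 : 1 ≤ i ≤ r−1}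 + {λ'_j − r + c + a − j : 1 ≤ j ≤ c−1} + {e} + {1, 2, …, a−1} + {1, 2, …, e−a}. -/
namespace HookAux

lemma mono_of {f : ℕ → ℕ} (hf : IsPartition f) : ∀ i i', 1 ≤ i → i ≤ i' → f i' ≤ f i := by
  intro i i' h1 h2
  induction i', h2 using Nat.le_induction with
  | base => exact le_rfl
  | succ n hn ih => exact le_trans (hf.2.1 n (le_trans h1 hn)) ih

lemma conjP_eq (f : ℕ → ℕ) (j k : ℕ)
    (h1 : ∀ i, 1 ≤ i → i ≤ k → j ≤ f i) (h2 : ∀ i, k < i → f i < j) :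
    conjP f j = k := by
  have hset : {i : ℕ | 1 ≤ i ∧ j ≤ f i} = ↑(Finset.Icc 1 k) := by
    ext i
    simp only [Set.mem_setOf_eq, Finset.coe_Icc, Set.mem_Icc]
    constructor
    · rintro ⟨hi, hj⟩
      refine ⟨hi, ?_⟩
      by_contra h
      exact absurd hj (not_le.2 (h2 i (by omega)))
    · rintro ⟨hi, hik⟩; exact ⟨hi, h1 i hi hik⟩
  rw [conjP, hset, Set.ncard_coe_finset, Nat.card_Icc]
  omega

lemma conjP_char {f : ℕ → ℕ} (hf : IsPartition f) (j : ℕ) (hj : 1 ≤ j) :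
    ∀ i, 1 ≤ i → (j ≤ f i ↔ i ≤ conjP f j) := by
  classical
  obtain ⟨N, hN⟩ := hf.2.2
  set k := Nat.findGreatest (fun i => j ≤ f i) N with hk
  have hkiff := (Nat.findGreatest_eq_iff (m := k) (k := N) (P := fun i => j ≤ f i)).1 hk.symm
  have h2 : ∀ i, k < i → f i < j := by
    intro i hi
    by_cases hiN : i ≤ N
    · have := hkiff.2.2 hi hiN
      omega
    · have := hN i (by omega); omega
  have h1 : ∀ i, 1 ≤ i → i ≤ k → j ≤ f i := by
    intro i hi hik
    have hk1 : k ≠ 0 := by omega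
    have hPk : j ≤ f k := hkiff.2.1 hk1
    exact le_trans hPk (mono_of hf i k hi hik)
  have hc : conjP f j = k := conjP_eq f j k h1 h2
  intro i hi
  rw [hc]
  constructor
  · intro h; by_contra hik; exact absurd h (not_le.2 (h2 i (by omega)))
  · intro h; exact h1 i hi h

lemma conjP_congr {f g : ℕ → ℕ} {j : ℕ} (h : ∀ i, 1 ≤ i → (j ≤ f i ↔ j ≤ g i)) :
    conjP f j = conjP g j := by
  unfold conjP
  congr 1
  ext i
  simp only [Set.mem_setOf_eq]
  exact and_congr_right fun hi => h i hi

lemma filter_bind' {α β : Type*} (p : β → Prop) [DecidablePred p] (s : Multiset α)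
    (f : α → Multiset β) :
    (s.bind f).filter p = s.bind fun a => (f a).filter p := by
  induction s using Multiset.induction_on with
  | empty => simp
  | cons a s ih => simp [Multiset.cons_bind, Multiset.filter_add, ih]

lemma sprod_val {α β : Type*} (s : Multiset α) (t : Multiset β) :
    s ×ˢ t = s.bind fun a => t.map (Prod.mk a) := rfl

lemma Icc_split (a k b : ℕ) (h1 : a ≤ k + 1) (h2 : k ≤ b) :
    (Finset.Icc a b).val = (Finset.Icc a k).val + (Finset.Icc (k + 1) b).val := by
  have hd : Disjoint (Finset.Icc a k) (Finset.Icc (k + 1) b) := by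
    simp only [Finset.disjoint_left, Finset.mem_Icc]
    omega
  have he : Finset.Icc a b = (Finset.Icc a k).disjUnion (Finset.Icc (k + 1) b) hd := by
    ext x
    simp only [Finset.mem_Icc, Finset.mem_disjUnion]
    omega
  rw [he]
  rfl

lemma revIcc : ∀ (n k : ℕ),
    (Finset.Icc (k + 1) (k + n)).val.map (fun j : ℕ => ((k : ℤ) + (n : ℤ) + 1 - (j : ℤ)))
      = (Finset.Icc 1 n).val.map (fun i : ℕ => (i : ℤ)) := by
  intro n
  induction n with
  | zero =>
    intro k
    rw [Finset.Icc_eq_empty (by omega), Finset.Icc_eq_empty (by omega)]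
    rfl
  | succ n ih =>
    intro k
    have hsplit := Icc_split (k + 1) (k + 1) (k + (n + 1)) (by omega) (by omega)
    rw [hsplit, Multiset.map_add]
    have h1 : (Finset.Icc (k + 1) (k + 1)).val = {k + 1} := by
      rw [Finset.Icc_self]; rfl
    have h2 : (Finset.Icc (k + 1 + 1) (k + (n + 1))) = Finset.Icc ((k + 1) + 1) ((k + 1) + n) := by
      congr 1; omega
    rw [h1, h2]
    have h3 : (Finset.Icc ((k+1) + 1) ((k+1) + n)).val.map
        (fun j : ℕ => ((k : ℤ) + ((n : ℤ) + 1) + 1 - (j : ℤ)))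
        = (Finset.Icc ((k+1) + 1) ((k+1) + n)).val.map
          (fun j : ℕ => (((k+1 : ℕ) : ℤ) + (n : ℤ) + 1 - (j : ℤ))) := by
      apply Multiset.map_congr rfl
      intro x _
      push_cast
      ring
    have hsplit2 := Icc_split 1 n (n + 1) (by omega) (by omega)
    rw [hsplit2, Multiset.map_add]
    have h4 : (Finset.Icc (n + 1) (n + 1)).val = {n + 1} := by
      rw [Finset.Icc_self]; rfl
    rw [h4]
    simp only [Multiset.map_singleton]
    push_cast
    rw [h3, ih (k + 1)]
    push_cast
    have : (k : ℤ) + ((n : ℤ) + 1) + 1 - ((k : ℤ) + 1) = (n : ℤ) + 1 := by ring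
    rw [this]
    exact add_comm _ _

lemma hooksP_bind {f : ℕ → ℕ} (hf : IsPartition f) (R : ℕ) (hR : conjP f 1 ≤ R) :
    hooksP f = (Finset.Icc 1 R).val.bind
      (fun i => (Finset.Icc 1 (f i)).val.map
        (fun j : ℕ => (f i : ℤ) - (j : ℤ) + (conjP f j : ℤ) - (i : ℤ) + 1)) := by
  classical
  have hmono := mono_of hf
  have hchar := conjP_char hf 1 le_rfl
  rw [hooksP, Finset.filter_val, Finset.product_val, sprod_val, filter_bind',
    Multiset.map_bind]
  rw [Icc_split 1 (conjP f 1) R (by omega) hR, Multiset.add_bind]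
  have hzero : (Finset.Icc (conjP f 1 + 1) R).val.bind
      (fun i => (Finset.Icc 1 (f i)).val.map
        (fun j : ℕ => (f i : ℤ) - (j : ℤ) + (conjP f j : ℤ) - (i : ℤ) + 1)) = 0 := by
    rw [Multiset.bind_congr (g := fun _ => (0 : Multiset ℤ)) ?_, Multiset.bind_zero]
    intro i hi
    simp only [Finset.mem_val, Finset.mem_Icc] at hi
    have hfi : f i = 0 := by
      by_contra h
      have : 1 ≤ f i := by omega
      rw [hchar i (by omega)] at this
      omega
    rw [hfi, Finset.Icc_eq_empty (by omega)]
    rfl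
  rw [hzero, add_zero]
  apply Multiset.bind_congr
  intro i hi
  simp only [Finset.mem_val, Finset.mem_Icc] at hi
  rw [Multiset.filter_map, Multiset.map_map]
  have hfile : f i ≤ f 1 := hmono 1 i le_rfl hi.1
  have hfilter : Multiset.filter ((fun p : ℕ × ℕ => p.2 ≤ f p.1) ∘ Prod.mk i)
      (Finset.Icc 1 (f 1)).val = (Finset.Icc 1 (f i)).val := by
    have : Finset.filter (fun j => j ≤ f i) (Finset.Icc 1 (f 1)) = Finset.Icc 1 (f i) := by
      ext j
      simp only [Finset.mem_filter, Finset.mem_Icc]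
      omega
    rw [← this, Finset.filter_val]
    rfl
  rw [hfilter]
  rfl

end HookAux

set_option maxHeartbeats 1000000 in
/-- The multiset of hook lengths after adding a straight `e`-hook with
arm length `a − 1` at row `r` (with `c = λ_r + 1` the column of the corner): an equality
of multisets of integers describing the replacement of hook lengths. -/
theorem hooks_add_straight_hook
    (e a r c : ℕ) (he : 1 ≤ e) (ha1 : 1 ≤ a) (hae : a ≤ e) (hr : 1 ≤ r)
    (f : ℕ → ℕ) (hf : IsPartition f)
    (hcorner : 1 < r → f r + a ≤ f (r - 1))
    (hflat : ∀ i, r < i → i ≤ r + e - a → f i = f r)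
    (hc : c = f r + 1)
    (g : ℕ → ℕ)
    (hg : ∀ i, g i = if i = r then f r + a
      else if r < i ∧ i ≤ r + e - a then f i + 1 else f i) :
    hooksP g
        + (Finset.Icc 1 (r - 1)).val.map
            (fun i => (f i : ℤ) - (c : ℤ) + (r : ℤ) - (a : ℤ) - (i : ℤ) + 1)
        + (Finset.Icc 1 (c - 1)).val.map
            (fun j => (conjP f j : ℤ) - (r : ℤ) + (c : ℤ) - (e : ℤ) + (a : ℤ) - (j : ℤ)) =
      hooksP f
        + (Finset.Icc 1 (r - 1)).val.map
            (fun i => (f i : ℤ) - (c : ℤ) + (r : ℤ) + (e : ℤ) - (a : ℤ) - (i : ℤ) + 1)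
        + (Finset.Icc 1 (c - 1)).val.map
            (fun j => (conjP f j : ℤ) - (r : ℤ) + (c : ℤ) + (a : ℤ) - (j : ℤ))
        + {(e : ℤ)}
        + (Finset.Icc 1 (a - 1)).val.map (fun i => (i : ℤ))
        + (Finset.Icc 1 (e - a)).val.map (fun i => (i : ℤ)) := by
  classical
  subst hc
  simp only [Multiset.pure_def, Multiset.bind_def, Multiset.bind_singleton,
    Multiset.map_id', Nat.add_sub_cancel]
  set m := f r with hm
  set s := r + e - a with hs
  have hsr : r ≤ s := by omega
  have hmono := HookAux.mono_of hf
  have hglt : ∀ i, i < r → g i = f i := by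
    intro i hi; rw [hg, if_neg (by omega), if_neg (by omega)]
  have hgr : g r = m + a := by rw [hg, if_pos rfl]
  have hgmid : ∀ i, r < i → i ≤ s → g i = f i + 1 := by
    intro i h1 h2; rw [hg, if_neg (by omega), if_pos ⟨h1, h2⟩]
  have hggt : ∀ i, s < i → g i = f i := by
    intro i hi; rw [hg, if_neg (by omega), if_neg (by omega)]
  have hfeq : ∀ i, r ≤ i → i ≤ s → f i = m := by
    intro i h1 h2
    rcases Nat.eq_or_lt_of_le h1 with h | h
    · rw [← h]
    · exact hflat i h h2
  have hfler : ∀ i, r ≤ i → f i ≤ m := fun i h => hmono r i hr h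
  have hfcorner : ∀ i, 1 ≤ i → i ≤ r - 1 → m + a ≤ f i := by
    intro i h1 h2
    exact le_trans (hcorner (by omega)) (hmono i (r - 1) h1 h2)
  have hfleg : ∀ i, f i ≤ g i := by
    intro i
    by_cases h1 : i < r
    · rw [hglt i h1]
    by_cases h2 : i = r
    · subst h2; rw [hgr]; omega
    by_cases h3 : i ≤ s
    · rw [hgmid i (by omega) h3]; omega
    · rw [hggt i (by omega)]
  have hgpart : IsPartition g := by
    refine ⟨by rw [hg, if_neg (by omega), if_neg (by omega)]; exact hf.1, ?_, ?_⟩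
    · intro i hi
      by_cases h1 : i + 1 < r
      · rw [hglt _ h1, hglt _ (by omega)]; exact hf.2.1 i hi
      by_cases h2 : i + 1 = r
      · rw [hglt i (by omega), h2, hgr]
        have h3 := hcorner (by omega)
        have h4 : r - 1 = i := by omega
        rw [h4] at h3
        exact h3
      by_cases h3 : i = r
      · subst h3; rw [hgr]
        by_cases h4 : i + 1 ≤ s
        · rw [hgmid _ (by omega) h4, hfeq _ (by omega) h4]; omega
        · rw [hggt _ (by omega)]; have := hfler (i + 1) (by omega); omega
      have hri : r < i := by omega
      by_cases h5 : i + 1 ≤ s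
      · rw [hgmid _ hri (by omega), hgmid _ (by omega) h5]
        exact Nat.succ_le_succ (hf.2.1 i hi)
      by_cases h6 : i ≤ s
      · rw [hgmid _ hri h6, hggt _ (by omega)]
        have := hf.2.1 i hi; omega
      · rw [hggt _ (by omega), hggt _ (by omega)]; exact hf.2.1 i hi
    · obtain ⟨N, hN⟩ := hf.2.2
      exact ⟨max N (s + 1), fun i hi => by
        rw [hggt i (by omega)]; exact hN i (by omega)⟩
  -- conjugate computations
  have hconj_lo : ∀ j, 1 ≤ j → j ≤ m → conjP g j = conjP f j := by
    intro j h1 h2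
    refine (HookAux.conjP_congr ?_).symm
    intro i hi
    constructor
    · intro h; exact le_trans h (hfleg i)
    · intro h
      by_cases hir : i < r
      · rwa [hglt i hir] at h
      by_cases hirs : i ≤ s
      · have := hfeq i (by omega) hirs; omega
      · rwa [hggt i (by omega)] at h
  have hconj_hi : ∀ j, m + a + 1 ≤ j → conjP g j = conjP f j := by
    intro j h1
    refine (HookAux.conjP_congr ?_).symm
    intro i hi
    constructor
    · intro h; exact le_trans h (hfleg i)
    · intro h
      by_cases hir : i < r
      · rwa [hglt i hir] at h
      by_cases hirs : i ≤ s
      · exfalso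
        by_cases h2 : i = r
        · subst h2; rw [hgr] at h; omega
        · rw [hgmid i (by omega) hirs] at h
          have := hfeq i (by omega) hirs; omega
      · rwa [hggt i (by omega)] at h
  have hconjf_mid : ∀ j, m + 1 ≤ j → j ≤ m + a → conjP f j = r - 1 := by
    intro j h1 h2
    apply HookAux.conjP_eq
    · intro i hi1 hi2; have := hfcorner i hi1 hi2; omega
    · intro i hi; have := hfler i (by omega); omega
  have hconjg_c : conjP g (m + 1) = s := by
    apply HookAux.conjP_eq
    · intro i h1 h2
      by_cases hir : i < r
      · have := hfcorner i h1 (by omega); rw [hglt i hir]; omega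
      by_cases h3 : i = r
      · subst h3; rw [hgr]; omega
      · rw [hgmid i (by omega) h2]
        have := hfeq i (by omega) h2; omega
    · intro i hi
      rw [hggt i hi]; have := hfler i (by omega); omega
  have hconjg_mid : ∀ j, m + 2 ≤ j → j ≤ m + a → conjP g j = r := by
    intro j h1 h2
    apply HookAux.conjP_eq
    · intro i hi1 hi2
      by_cases hir : i < r
      · have := hfcorner i hi1 (by omega); rw [hglt i hir]; omega
      · have h3 : i = r := by omega
        subst h3; rw [hgr]; omega
    · intro i hi
      by_cases h3 : i ≤ s
      · rw [hgmid i hi h3, hfeq i (by omega) h3]; omega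
      · rw [hggt i (by omega)]; have := hfler i (by omega); omega
  -- expand hooksP as bind over rows
  set R := max (max (conjP f 1) (conjP g 1)) (s + 1) with hR
  rw [HookAux.hooksP_bind hf R (by omega), HookAux.hooksP_bind hgpart R (by omega)]
  have hr1 : r - 1 + 1 = r := by omega
  have hsplit : (Finset.Icc 1 R).val
      = (Finset.Icc 1 (r - 1)).val + {r} + (Finset.Icc (r + 1) s).val
        + (Finset.Icc (s + 1) R).val := by
    have e1 := HookAux.Icc_split 1 s R (by omega) (by omega)
    have e2 := HookAux.Icc_split 1 r s (by omega) hsr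
    have e3 := HookAux.Icc_split 1 (r - 1) r (by omega) (by omega)
    rw [hr1] at e3
    rw [e1, e2, e3, Finset.Icc_self]
    have : ({r} : Finset ℕ).val = ({r} : Multiset ℕ) := rfl
    rw [this]
  rw [hsplit]
  simp only [Multiset.add_bind, Multiset.singleton_bind]
  simp only [← hm]
  have hsing : ∀ x : ℕ, (Finset.Icc x x).val = ({x} : Multiset ℕ) := by
    intro x; rw [Finset.Icc_self]; rfl
  -- E1 : rows 1..r-1
  have E1 : ((Finset.Icc 1 (r - 1)).val.bind fun i =>
        Multiset.map (fun j : ℕ => ((g i : ℤ) - (j : ℤ) + (conjP g j : ℤ) - (i : ℤ) + 1))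
          (Finset.Icc 1 (g i)).val)
      + Multiset.map (fun i : ℕ => ((f i : ℤ) - ((m + 1 : ℕ) : ℤ) + (r : ℤ) - (a : ℤ) - (i : ℤ) + 1))
          (Finset.Icc 1 (r - 1)).val
      = ((Finset.Icc 1 (r - 1)).val.bind fun i =>
        Multiset.map (fun j : ℕ => ((f i : ℤ) - (j : ℤ) + (conjP f j : ℤ) - (i : ℤ) + 1))
          (Finset.Icc 1 (f i)).val)
      + Multiset.map
          (fun i : ℕ => ((f i : ℤ) - ((m + 1 : ℕ) : ℤ) + (r : ℤ) + (e : ℤ) - (a : ℤ) - (i : ℤ) + 1))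
          (Finset.Icc 1 (r - 1)).val := by
    rw [← Multiset.bind_singleton
        (f := fun i : ℕ => ((f i : ℤ) - ((m + 1 : ℕ) : ℤ) + (r : ℤ) - (a : ℤ) - (i : ℤ) + 1)),
      ← Multiset.bind_singleton
        (f := fun i : ℕ => ((f i : ℤ) - ((m + 1 : ℕ) : ℤ) + (r : ℤ) + (e : ℤ) - (a : ℤ) - (i : ℤ) + 1)),
      ← Multiset.bind_add, ← Multiset.bind_add]
    apply Multiset.bind_congr
    intro i hi
    simp only [Finset.mem_val, Finset.mem_Icc] at hi
    obtain ⟨hi1, hi2⟩ := hi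
    have hfi : m + a ≤ f i := hfcorner i hi1 hi2
    rw [hglt i (by omega)]
    have decompG : (Finset.Icc 1 (f i)).val
        = ((Finset.Icc 1 m).val + ({m + 1} : Multiset ℕ) + (Finset.Icc (m + 1 + 1) (m + a)).val)
          + (Finset.Icc (m + a + 1) (f i)).val := by
      rw [HookAux.Icc_split 1 m (f i) (by omega) (by omega),
        HookAux.Icc_split (m + 1) (m + 1) (f i) (by omega) (by omega),
        HookAux.Icc_split (m + 1 + 1) (m + a) (f i) (by omega) (by omega),
        hsing]
      abel
    have decompF : (Finset.Icc 1 (f i)).val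
        = ((Finset.Icc 1 m).val + (Finset.Icc (m + 1) (m + a - 1)).val + ({m + a} : Multiset ℕ))
          + (Finset.Icc (m + a + 1) (f i)).val := by
      rw [HookAux.Icc_split 1 m (f i) (by omega) (by omega),
        HookAux.Icc_split (m + 1) (m + a - 1) (f i) (by omega) (by omega),
        show m + a - 1 + 1 = m + a from by omega,
        HookAux.Icc_split (m + a) (m + a) (f i) (by omega) (by omega),
        hsing]
      abel
    conv_lhs => rw [decompG]
    conv_rhs => rw [decompF]
    simp only [Multiset.map_add, Multiset.map_singleton]
    have p1 : Multiset.map (fun j : ℕ => ((f i : ℤ) - (j : ℤ) + (conjP g j : ℤ) - (i : ℤ) + 1))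
        (Finset.Icc 1 m).val
        = Multiset.map (fun j : ℕ => ((f i : ℤ) - (j : ℤ) + (conjP f j : ℤ) - (i : ℤ) + 1))
          (Finset.Icc 1 m).val := by
      apply Multiset.map_congr rfl
      intro j hj
      simp only [Finset.mem_val, Finset.mem_Icc] at hj
      rw [hconj_lo j hj.1 hj.2]
    have p2 : ((f i : ℤ) - ((m + 1 : ℕ) : ℤ) + (conjP g (m + 1) : ℤ) - (i : ℤ) + 1)
        = ((f i : ℤ) - ((m + 1 : ℕ) : ℤ) + (r : ℤ) + (e : ℤ) - (a : ℤ) - (i : ℤ) + 1) := by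
      rw [hconjg_c]; omega
    have p3 : Multiset.map (fun j : ℕ => ((f i : ℤ) - (j : ℤ) + (conjP g j : ℤ) - (i : ℤ) + 1))
        (Finset.Icc (m + 1 + 1) (m + a)).val
        = Multiset.map (fun j : ℕ => ((f i : ℤ) - (j : ℤ) + (conjP f j : ℤ) - (i : ℤ) + 1))
          (Finset.Icc (m + 1) (m + a - 1)).val := by
      have hre : (Finset.Icc (m + 1) (m + a - 1)).val.map (fun x => x + 1)
          = (Finset.Icc (m + 1 + 1) (m + a)).val := by
        have h7 := Multiset.map_add_right_Icc (m + 1) (m + a - 1) 1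
        rw [show m + a - 1 + 1 = m + a from by omega] at h7
        exact h7
      rw [← hre, Multiset.map_map]
      apply Multiset.map_congr rfl
      intro j hj
      simp only [Finset.mem_val, Finset.mem_Icc] at hj
      simp only [Function.comp_apply]
      rw [hconjg_mid (j + 1) (by omega) (by omega), hconjf_mid j (by omega) (by omega)]
      omega
    have p4 : ((f i : ℤ) - ((m + a : ℕ) : ℤ) + (conjP f (m + a) : ℤ) - (i : ℤ) + 1)
        = ((f i : ℤ) - ((m + 1 : ℕ) : ℤ) + (r : ℤ) - (a : ℤ) - (i : ℤ) + 1) := by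
      rw [hconjf_mid (m + a) (by omega) (by omega)]; omega
    have p5 : Multiset.map (fun j : ℕ => ((f i : ℤ) - (j : ℤ) + (conjP g j : ℤ) - (i : ℤ) + 1))
        (Finset.Icc (m + a + 1) (f i)).val
        = Multiset.map (fun j : ℕ => ((f i : ℤ) - (j : ℤ) + (conjP f j : ℤ) - (i : ℤ) + 1))
          (Finset.Icc (m + a + 1) (f i)).val := by
      apply Multiset.map_congr rfl
      intro j hj
      simp only [Finset.mem_val, Finset.mem_Icc] at hj
      rw [hconj_hi j (by omega)]
    rw [p1, p2, p3, p4, p5]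
    abel
  -- E2 : row r of g
  have E2 : Multiset.map (fun j : ℕ => ((g r : ℤ) - (j : ℤ) + (conjP g j : ℤ) - (r : ℤ) + 1))
        (Finset.Icc 1 (g r)).val
      = Multiset.map (fun x : ℕ => ((conjP f x : ℤ) - (r : ℤ) + ((m + 1 : ℕ) : ℤ) + (a : ℤ) - (x : ℤ)))
          (Finset.Icc 1 m).val
        + {(e : ℤ)} + Multiset.map Nat.cast (Finset.Icc 1 (a - 1)).val := by
    rw [hgr]
    have decomp : (Finset.Icc 1 (m + a)).val
        = ((Finset.Icc 1 m).val + ({m + 1} : Multiset ℕ)) + (Finset.Icc (m + 1 + 1) (m + a)).val := by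
      rw [HookAux.Icc_split 1 m (m + a) (by omega) (by omega),
        HookAux.Icc_split (m + 1) (m + 1) (m + a) (by omega) (by omega), hsing]
      abel
    rw [decomp]
    simp only [Multiset.map_add, Multiset.map_singleton]
    have q1 : Multiset.map (fun j : ℕ => (((m + a : ℕ) : ℤ) - (j : ℤ) + (conjP g j : ℤ) - (r : ℤ) + 1))
        (Finset.Icc 1 m).val
        = Multiset.map
          (fun x : ℕ => ((conjP f x : ℤ) - (r : ℤ) + ((m + 1 : ℕ) : ℤ) + (a : ℤ) - (x : ℤ)))
          (Finset.Icc 1 m).val := by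
      apply Multiset.map_congr rfl
      intro j hj
      simp only [Finset.mem_val, Finset.mem_Icc] at hj
      rw [hconj_lo j hj.1 hj.2]
      omega
    have q2 : (((m + a : ℕ) : ℤ) - ((m + 1 : ℕ) : ℤ) + (conjP g (m + 1) : ℤ) - (r : ℤ) + 1)
        = ((e : ℕ) : ℤ) := by
      rw [hconjg_c]; omega
    have q3 : Multiset.map
        (fun j : ℕ => (((m + a : ℕ) : ℤ) - (j : ℤ) + (conjP g j : ℤ) - (r : ℤ) + 1))
        (Finset.Icc (m + 1 + 1) (m + a)).val
        = Multiset.map Nat.cast (Finset.Icc 1 (a - 1)).val := by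
      have h8 := HookAux.revIcc (a - 1) (m + 1)
      rw [show m + 1 + (a - 1) = m + a from by omega] at h8
      rw [← h8]
      apply Multiset.map_congr rfl
      intro j hj
      simp only [Finset.mem_val, Finset.mem_Icc] at hj
      rw [hconjg_mid j (by omega) (by omega)]
      omega
    rw [q1, q2, q3]
  -- E3 : rows r+1..s of g together with the B' list
  have E3 : ((Finset.Icc (r + 1) s).val.bind fun i =>
        Multiset.map (fun j : ℕ => ((g i : ℤ) - (j : ℤ) + (conjP g j : ℤ) - (i : ℤ) + 1))
          (Finset.Icc 1 (g i)).val)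
      + Multiset.map
          (fun x : ℕ => ((conjP f x : ℤ) - (r : ℤ) + ((m + 1 : ℕ) : ℤ) - (e : ℤ) + (a : ℤ) - (x : ℤ)))
          (Finset.Icc 1 m).val
      = (Multiset.map (fun j : ℕ => ((m : ℤ) - (j : ℤ) + (conjP f j : ℤ) - (r : ℤ) + 1))
          (Finset.Icc 1 m).val
        + ((Finset.Icc (r + 1) s).val.bind fun i =>
          Multiset.map (fun j : ℕ => ((f i : ℤ) - (j : ℤ) + (conjP f j : ℤ) - (i : ℤ) + 1))
            (Finset.Icc 1 (f i)).val))
        + Multiset.map Nat.cast (Finset.Icc 1 (e - a)).val := by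
    have rowG : ∀ i ∈ (Finset.Icc (r + 1) s).val,
        Multiset.map (fun j : ℕ => ((g i : ℤ) - (j : ℤ) + (conjP g j : ℤ) - (i : ℤ) + 1))
          (Finset.Icc 1 (g i)).val
        = Multiset.map (fun j : ℕ => (((m + 1 : ℕ) : ℤ) - (j : ℤ) + (conjP f j : ℤ) - (i : ℤ) + 1))
            (Finset.Icc 1 m).val
          + {((s : ℤ) - (i : ℤ) + 1)} := by
      intro i hi
      simp only [Finset.mem_val, Finset.mem_Icc] at hi
      have hgi : g i = m + 1 := by rw [hgmid i (by omega) hi.2, hfeq i (by omega) hi.2]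
      rw [hgi]
      have decomp : (Finset.Icc 1 (m + 1)).val
          = (Finset.Icc 1 m).val + ({m + 1} : Multiset ℕ) := by
        rw [HookAux.Icc_split 1 m (m + 1) (by omega) (by omega), hsing]
      rw [decomp, Multiset.map_add, Multiset.map_singleton]
      congr 1
      · apply Multiset.map_congr rfl
        intro j hj
        simp only [Finset.mem_val, Finset.mem_Icc] at hj
        rw [hconj_lo j hj.1 hj.2]
      · rw [hconjg_c]
        congr 1
        omega
    rw [Multiset.bind_congr rowG, Multiset.bind_add, Multiset.bind_singleton]
    have hMe : Multiset.map (fun i : ℕ => ((s : ℤ) - (i : ℤ) + 1)) (Finset.Icc (r + 1) s).val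
        = Multiset.map Nat.cast (Finset.Icc 1 (e - a)).val := by
      have h8 := HookAux.revIcc (e - a) r
      rw [show r + (e - a) = s from by omega] at h8
      rw [← h8]
      apply Multiset.map_congr rfl
      intro j hj
      simp only [Finset.mem_val, Finset.mem_Icc] at hj
      omega
    rw [hMe]
    have hrows : ((Finset.Icc (r + 1) s).val.bind fun i =>
          Multiset.map (fun j : ℕ => (((m + 1 : ℕ) : ℤ) - (j : ℤ) + (conjP f j : ℤ) - (i : ℤ) + 1))
            (Finset.Icc 1 m).val)
        = ((Finset.Icc r (s - 1)).val.bind fun i =>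
          Multiset.map (fun j : ℕ => ((m : ℤ) - (j : ℤ) + (conjP f j : ℤ) - (i : ℤ) + 1))
            (Finset.Icc 1 m).val) := by
      have h9 : (Finset.Icc r (s - 1)).val.map (fun x => x + 1) = (Finset.Icc (r + 1) s).val := by
        have h10 := Multiset.map_add_right_Icc r (s - 1) 1
        rw [show s - 1 + 1 = s from by omega] at h10
        exact h10
      rw [← h9, Multiset.bind_map]
      apply Multiset.bind_congr
      intro i hi
      apply Multiset.map_congr rfl
      intro j hj
      push_cast
      ring
    rw [hrows]
    have hFrows : ((Finset.Icc (r + 1) s).val.bind fun i =>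
          Multiset.map (fun j : ℕ => ((f i : ℤ) - (j : ℤ) + (conjP f j : ℤ) - (i : ℤ) + 1))
            (Finset.Icc 1 (f i)).val)
        = ((Finset.Icc (r + 1) s).val.bind fun i =>
          Multiset.map (fun j : ℕ => ((m : ℤ) - (j : ℤ) + (conjP f j : ℤ) - (i : ℤ) + 1))
            (Finset.Icc 1 m).val) := by
      apply Multiset.bind_congr
      intro i hi
      simp only [Finset.mem_val, Finset.mem_Icc] at hi
      rw [hfeq i (by omega) hi.2]
    rw [hFrows]
    have hB' : Multiset.map
        (fun x : ℕ => ((conjP f x : ℤ) - (r : ℤ) + ((m + 1 : ℕ) : ℤ) - (e : ℤ) + (a : ℤ) - (x : ℤ)))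
        (Finset.Icc 1 m).val
        = Multiset.map (fun j : ℕ => ((m : ℤ) - (j : ℤ) + (conjP f j : ℤ) - (s : ℤ) + 1))
          (Finset.Icc 1 m).val := by
      apply Multiset.map_congr rfl
      intro j hj
      omega
    rw [hB']
    have h11 : Multiset.map (fun j : ℕ => ((m : ℤ) - (j : ℤ) + (conjP f j : ℤ) - (s : ℤ) + 1))
        (Finset.Icc 1 m).val
        = Multiset.bind ({s} : Multiset ℕ) (fun i =>
          Multiset.map (fun j : ℕ => ((m : ℤ) - (j : ℤ) + (conjP f j : ℤ) - (i : ℤ) + 1))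
            (Finset.Icc 1 m).val) := by
      rw [Multiset.singleton_bind]
    have h12 : Multiset.map (fun j : ℕ => ((m : ℤ) - (j : ℤ) + (conjP f j : ℤ) - (r : ℤ) + 1))
        (Finset.Icc 1 m).val
        = Multiset.bind ({r} : Multiset ℕ) (fun i =>
          Multiset.map (fun j : ℕ => ((m : ℤ) - (j : ℤ) + (conjP f j : ℤ) - (i : ℤ) + 1))
            (Finset.Icc 1 m).val) := by
      rw [Multiset.singleton_bind]
    rw [h11, h12]
    have key : (Finset.Icc r (s - 1)).val + ({s} : Multiset ℕ)
        = ({r} : Multiset ℕ) + (Finset.Icc (r + 1) s).val := by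
      have hA := HookAux.Icc_split r (s - 1) s (by omega) (by omega)
      rw [show s - 1 + 1 = s from by omega, hsing] at hA
      have hB := HookAux.Icc_split r r s (by omega) hsr
      rw [hsing] at hB
      rw [← hA, ← hB]
    have main : ((Finset.Icc r (s - 1)).val.bind fun i =>
          Multiset.map (fun j : ℕ => ((m : ℤ) - (j : ℤ) + (conjP f j : ℤ) - (i : ℤ) + 1))
            (Finset.Icc 1 m).val)
        + Multiset.bind ({s} : Multiset ℕ) (fun i =>
          Multiset.map (fun j : ℕ => ((m : ℤ) - (j : ℤ) + (conjP f j : ℤ) - (i : ℤ) + 1))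
            (Finset.Icc 1 m).val)
        = Multiset.bind ({r} : Multiset ℕ) (fun i =>
          Multiset.map (fun j : ℕ => ((m : ℤ) - (j : ℤ) + (conjP f j : ℤ) - (i : ℤ) + 1))
            (Finset.Icc 1 m).val)
        + ((Finset.Icc (r + 1) s).val.bind fun i =>
          Multiset.map (fun j : ℕ => ((m : ℤ) - (j : ℤ) + (conjP f j : ℤ) - (i : ℤ) + 1))
            (Finset.Icc 1 m).val) := by
      rw [← Multiset.add_bind, ← Multiset.add_bind, key]
    calc ((Finset.Icc r (s - 1)).val.bind fun i =>
          Multiset.map (fun j : ℕ => ((m : ℤ) - (j : ℤ) + (conjP f j : ℤ) - (i : ℤ) + 1))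
            (Finset.Icc 1 m).val)
        + Multiset.map Nat.cast (Finset.Icc 1 (e - a)).val
        + Multiset.bind ({s} : Multiset ℕ) (fun i =>
          Multiset.map (fun j : ℕ => ((m : ℤ) - (j : ℤ) + (conjP f j : ℤ) - (i : ℤ) + 1))
            (Finset.Icc 1 m).val)
        = (((Finset.Icc r (s - 1)).val.bind fun i =>
          Multiset.map (fun j : ℕ => ((m : ℤ) - (j : ℤ) + (conjP f j : ℤ) - (i : ℤ) + 1))
            (Finset.Icc 1 m).val)
        + Multiset.bind ({s} : Multiset ℕ) (fun i =>
          Multiset.map (fun j : ℕ => ((m : ℤ) - (j : ℤ) + (conjP f j : ℤ) - (i : ℤ) + 1))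
            (Finset.Icc 1 m).val))
        + Multiset.map Nat.cast (Finset.Icc 1 (e - a)).val := by abel
      _ = (Multiset.bind ({r} : Multiset ℕ) (fun i =>
          Multiset.map (fun j : ℕ => ((m : ℤ) - (j : ℤ) + (conjP f j : ℤ) - (i : ℤ) + 1))
            (Finset.Icc 1 m).val)
        + ((Finset.Icc (r + 1) s).val.bind fun i =>
          Multiset.map (fun j : ℕ => ((m : ℤ) - (j : ℤ) + (conjP f j : ℤ) - (i : ℤ) + 1))
            (Finset.Icc 1 m).val))
        + Multiset.map Nat.cast (Finset.Icc 1 (e - a)).val := by rw [main]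
  -- E4 : rows beyond s
  have E4 : ((Finset.Icc (s + 1) R).val.bind fun i =>
        Multiset.map (fun j : ℕ => ((g i : ℤ) - (j : ℤ) + (conjP g j : ℤ) - (i : ℤ) + 1))
          (Finset.Icc 1 (g i)).val)
      = ((Finset.Icc (s + 1) R).val.bind fun i =>
        Multiset.map (fun j : ℕ => ((f i : ℤ) - (j : ℤ) + (conjP f j : ℤ) - (i : ℤ) + 1))
          (Finset.Icc 1 (f i)).val) := by
    apply Multiset.bind_congr
    intro i hi
    simp only [Finset.mem_val, Finset.mem_Icc] at hi
    rw [hggt i (by omega)]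
    apply Multiset.map_congr rfl
    intro j hj
    simp only [Finset.mem_val, Finset.mem_Icc] at hj
    have hfim : f i ≤ m := hfler i (by omega)
    rw [hconj_lo j hj.1 (by omega)]
  set X1 := ((Finset.Icc 1 (r - 1)).val.bind fun i =>
    Multiset.map (fun j : ℕ => ((g i : ℤ) - (j : ℤ) + (conjP g j : ℤ) - (i : ℤ) + 1))
      (Finset.Icc 1 (g i)).val) with hX1
  set X2 := Multiset.map (fun j : ℕ => ((g r : ℤ) - (j : ℤ) + (conjP g j : ℤ) - (r : ℤ) + 1))
      (Finset.Icc 1 (g r)).val with hX2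
  set X3 := ((Finset.Icc (r + 1) s).val.bind fun i =>
    Multiset.map (fun j : ℕ => ((g i : ℤ) - (j : ℤ) + (conjP g j : ℤ) - (i : ℤ) + 1))
      (Finset.Icc 1 (g i)).val) with hX3
  set X4 := ((Finset.Icc (s + 1) R).val.bind fun i =>
    Multiset.map (fun j : ℕ => ((g i : ℤ) - (j : ℤ) + (conjP g j : ℤ) - (i : ℤ) + 1))
      (Finset.Icc 1 (g i)).val) with hX4
  set Y1 := ((Finset.Icc 1 (r - 1)).val.bind fun i =>
    Multiset.map (fun j : ℕ => ((f i : ℤ) - (j : ℤ) + (conjP f j : ℤ) - (i : ℤ) + 1))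
      (Finset.Icc 1 (f i)).val) with hY1
  set Yr := Multiset.map (fun j : ℕ => ((m : ℤ) - (j : ℤ) + (conjP f j : ℤ) - (r : ℤ) + 1))
      (Finset.Icc 1 m).val with hYr
  set Y3 := ((Finset.Icc (r + 1) s).val.bind fun i =>
    Multiset.map (fun j : ℕ => ((f i : ℤ) - (j : ℤ) + (conjP f j : ℤ) - (i : ℤ) + 1))
      (Finset.Icc 1 (f i)).val) with hY3
  set Y4 := ((Finset.Icc (s + 1) R).val.bind fun i =>
    Multiset.map (fun j : ℕ => ((f i : ℤ) - (j : ℤ) + (conjP f j : ℤ) - (i : ℤ) + 1))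
      (Finset.Icc 1 (f i)).val) with hY4
  set ZA' := Multiset.map
      (fun i : ℕ => ((f i : ℤ) - ((m + 1 : ℕ) : ℤ) + (r : ℤ) - (a : ℤ) - (i : ℤ) + 1))
      (Finset.Icc 1 (r - 1)).val with hZA'
  set ZA := Multiset.map
      (fun i : ℕ => ((f i : ℤ) - ((m + 1 : ℕ) : ℤ) + (r : ℤ) + (e : ℤ) - (a : ℤ) - (i : ℤ) + 1))
      (Finset.Icc 1 (r - 1)).val with hZA
  set ZB' := Multiset.map
      (fun x : ℕ => ((conjP f x : ℤ) - (r : ℤ) + ((m + 1 : ℕ) : ℤ) - (e : ℤ) + (a : ℤ) - (x : ℤ)))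
      (Finset.Icc 1 m).val with hZB'
  set ZB := Multiset.map
      (fun x : ℕ => ((conjP f x : ℤ) - (r : ℤ) + ((m + 1 : ℕ) : ℤ) + (a : ℤ) - (x : ℤ)))
      (Finset.Icc 1 m).val with hZB
  set ZMa := Multiset.map (Nat.cast : ℕ → ℤ) (Finset.Icc 1 (a - 1)).val with hZMa
  set ZMe := Multiset.map (Nat.cast : ℕ → ℤ) (Finset.Icc 1 (e - a)).val with hZMe
  rw [E2, E4]
  calc X1 + (ZB + {(e : ℤ)} + ZMa) + X3 + Y4 + ZA' + ZB'
      = ((X1 + ZA') + (X3 + ZB')) + ((ZB + {(e : ℤ)} + ZMa) + Y4) := by abel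
    _ = ((Y1 + ZA) + ((Yr + Y3) + ZMe)) + ((ZB + {(e : ℤ)} + ZMa) + Y4) := by rw [E1, E3]
    _ = Y1 + Yr + Y3 + Y4 + ZA + ZB + {(e : ℤ)} + ZMa + ZMe := by abel
end

section
/- Let A be a commutative ring, let x be a unit of A, and let e ≥ 1 and 1 ≤ a ≤ e be integers with x^e = 1. Then x^{a(a−1)/2} · ∏_{i=1}^{e} (x^i + 1) = (x^e + 1) · ∏_{i=1}^{a−1} (x^i + 1) · ∏_{i=1}^{e−a} (x^i + 1). -/
/-!
Split `∏_{i=1}^{e}` after `e - a` and index the top `a` factors as `x^{e-j} + 1`, `j < a`.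
Since `x^e = 1`, `x^j (x^{e-j} + 1) = x^j + 1`, so `x^{a(a-1)/2} = ∏_{j<a} x^j` turns them into
`∏_{j<a} (x^j + 1) = 2 ∏_{i=1}^{a-1} (x^i + 1)`, and `2 = x^e + 1`.
-/

open Finset

theorem Finset.prod_Ioc_sub_eq_prod_range {M : Type*} [CommMonoid M] (f : ℕ → M) {a n : ℕ}
    (h : a ≤ n) : ∏ i ∈ Ioc (n - a) n, f i = ∏ j ∈ range a, f (n - j) := by
  refine prod_nbij' (n - ·) (n - ·) ?_ ?_ ?_ ?_ ?_ <;> intro i hi <;>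
    simp only [mem_Ioc, mem_range] at hi ⊢ <;> first | omega | (congr 1; omega)

theorem Finset.prod_Icc_one_eq_prod_Icc_one_sub_mul_prod_range {M : Type*} [CommMonoid M]
    (f : ℕ → M) {a n : ℕ} (h : a ≤ n) :
    ∏ i ∈ Icc 1 n, f i = (∏ i ∈ Icc 1 (n - a), f i) * ∏ j ∈ range a, f (n - j) := by
  have hIcc (m : ℕ) : Icc 1 m = Ioc 0 m := Icc_add_one_left_eq_Ioc 0 m
  rw [hIcc, hIcc, ← prod_Ioc_sub_eq_prod_range f h,
    prod_Ioc_consecutive f (Nat.zero_le _) (Nat.sub_le n a)]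

theorem Finset.prod_range_add_one_eq_mul_prod_Icc {M : Type*} [CommMonoid M] (f : ℕ → M)
    (n : ℕ) : ∏ i ∈ range (n + 1), f i = f 0 * ∏ i ∈ Icc 1 n, f i := by
  rw [range_eq_Ico, prod_eq_prod_Ico_succ_bot n.succ_pos, zero_add, Nat.succ_eq_add_one,
    Ico_add_one_right_eq_Icc]

theorem pow_mul_pow_sub_add_one {R : Type*} [Semiring R] {x : R} {e j : ℕ} (hxe : x ^ e = 1)
    (hj : j ≤ e) : x ^ j * (x ^ (e - j) + 1) = x ^ j + 1 := by
  rw [mul_add, mul_one, ← pow_add, Nat.add_sub_cancel' hj, hxe, add_comm]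

theorem pow_mul_prod_range_pow_sub_add_one {R : Type*} [CommSemiring R] {x : R}
    {e a : ℕ} (hxe : x ^ e = 1) (hae : a ≤ e) :
    x ^ (a * (a - 1) / 2) * ∏ j ∈ range a, (x ^ (e - j) + 1) = ∏ j ∈ range a, (x ^ j + 1) := by
  rw [← sum_range_id, ← prod_pow_eq_pow_sum, ← prod_mul_distrib]
  exact prod_congr rfl fun j hj => pow_mul_pow_sub_add_one hxe (by rw [mem_range] at hj; omega)

theorem pow_mul_prod_pow_add_one_general
    {A : Type*} [CommRing A] (x : A) (e a : ℕ)
    (ha1 : 1 ≤ a) (hae : a ≤ e) (hxe : x ^ e = 1) :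
    x ^ (a * (a - 1) / 2) * ∏ i ∈ Finset.Icc 1 e, (x ^ i + 1) =
      (x ^ e + 1) * (∏ i ∈ Finset.Icc 1 (a - 1), (x ^ i + 1)) *
        ∏ i ∈ Finset.Icc 1 (e - a), (x ^ i + 1) := by
  have hrange : ∏ j ∈ range a, (x ^ j + 1) = (x ^ e + 1) * ∏ i ∈ Icc 1 (a - 1), (x ^ i + 1) := by
    rw [← Nat.sub_add_cancel ha1, prod_range_add_one_eq_mul_prod_Icc, Nat.add_sub_cancel,
      pow_zero, hxe]
  rw [prod_Icc_one_eq_prod_Icc_one_sub_mul_prod_range _ hae, mul_left_comm,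
    pow_mul_prod_range_pow_sub_add_one hxe hae, hrange, mul_comm]

/-- Let `A` be a commutative ring, `x` a unit of `A`, and `e ≥ 1`,
`1 ≤ a ≤ e` integers with `x^e = 1`.  Then
`x^{a(a−1)/2} · ∏_{i=1}^{e} (x^i + 1) = (x^e + 1) · ∏_{i=1}^{a−1} (x^i + 1) · ∏_{i=1}^{e−a} (x^i + 1)`. -/
theorem pow_mul_prod_pow_add_one
    {A : Type*} [CommRing A] (x : A) (hx : IsUnit x) (e a : ℕ)
    (he : 1 ≤ e) (ha1 : 1 ≤ a) (hae : a ≤ e) (hxe : x ^ e = 1) :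
    x ^ (a * (a - 1) / 2) * ∏ i ∈ Finset.Icc 1 e, (x ^ i + 1) =
      (x ^ e + 1) * (∏ i ∈ Finset.Icc 1 (a - 1), (x ^ i + 1)) *
        ∏ i ∈ Finset.Icc 1 (e - a), (x ^ i + 1) :=
  pow_mul_prod_pow_add_one_general x e a ha1 hae hxe
end

section
/- Let λ ⊆ μ be partitions and r, c ≥ 1. Suppose (r,c) is an addable corner of λ (λ_r = c − 1 and λ'_c = r − 1), the cells (r,c), (r+1,c) and (r,c+1) all lie in the Young diagram of μ, and (r+1,c+1) is an addable corner of μ (μ_{r+1} = c and μ'_{c+1} = r). Let λ̄ be λ with the cell (r,c) added and μ̄ be μ with the cell (r+1,c+1) added. Then (d_{μ̄} − d_μ) − (d_{λ̄} − d_λ) = 1. -/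
/-- The cell `p = (i,j)` lies in the Young diagram of `f`: `1 ≤ i`, `1 ≤ j ≤ λ_i`. -/
def InDiagram (f : ℕ → ℕ) (p : ℕ × ℕ) : Prop :=
  1 ≤ p.1 ∧ 1 ≤ p.2 ∧ p.2 ≤ f p.1

lemma part_anti (f : ℕ → ℕ) (hf : IsPartition f) : ∀ i k, 1 ≤ i → f (i + k) ≤ f i := by
  intro i k hi
  induction k with
  | zero => simp
  | succ k ih => exact le_trans (hf.2.1 (i + k) (le_trans hi (Nat.le_add_right _ _))) ih

lemma part_le_one (f : ℕ → ℕ) (hf : IsPartition f) (i : ℕ) (hi : 1 ≤ i) : f i ≤ f 1 := by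
  obtain ⟨k, rfl⟩ := Nat.exists_eq_add_of_le hi
  exact part_anti f hf 1 k le_rfl

lemma conj_eventually_zero (f : ℕ → ℕ) (hf : IsPartition f) (j : ℕ) (hj : f 1 + 1 ≤ j) :
    conjP f j = 0 := by
  have h : {i : ℕ | 1 ≤ i ∧ j ≤ f i} = ∅ := by
    ext i; simp only [Set.mem_setOf_eq, Set.mem_empty_iff_false, iff_false, not_and]
    intro hi hji
    exact absurd (le_trans hji (part_le_one f hf i hi)) (by omega)
  simp [conjP, h]

lemma set_finite (f : ℕ → ℕ) (hf : IsPartition f) (j : ℕ) (hj : 1 ≤ j) :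
    Set.Finite {i : ℕ | 1 ≤ i ∧ j ≤ f i} := by
  obtain ⟨N, hN⟩ := hf.2.2
  apply Set.Finite.subset (Set.finite_Iio N)
  intro i ⟨hi1, hi2⟩
  simp only [Set.mem_Iio]
  by_contra h
  have := hN i (by omega)
  omega

lemma conj_bar (f : ℕ → ℕ) (hf : IsPartition f) (r : ℕ) (hr : 1 ≤ r)
    (fbar : ℕ → ℕ) (hfbar : ∀ i, fbar i = if i = r then f i + 1 else f i) (j : ℕ) :
    conjP fbar j = conjP f j + if j = f r + 1 then 1 else 0 := by
  rcases lt_trichotomy j (f r + 1) with h | h | h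
  · have hs : {i : ℕ | 1 ≤ i ∧ j ≤ fbar i} = {i : ℕ | 1 ≤ i ∧ j ≤ f i} := by
      ext i; simp only [Set.mem_setOf_eq, hfbar i]
      by_cases hir : i = r <;> simp [hir] <;> omega
    rw [if_neg (by omega)]
    simp [conjP, hs]
  · subst h
    have hset : {i : ℕ | 1 ≤ i ∧ f r + 1 ≤ fbar i} =
        insert r {i : ℕ | 1 ≤ i ∧ f r + 1 ≤ f i} := by
      ext i; simp only [Set.mem_setOf_eq, Set.mem_insert_iff, hfbar i]
      by_cases hir : i = r <;> simp [hir] <;> omega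
    have hnotmem : r ∉ {i : ℕ | 1 ≤ i ∧ f r + 1 ≤ f i} := by
      simp only [Set.mem_setOf_eq]; omega
    rw [conjP, conjP, hset, Set.ncard_insert_of_notMem hnotmem
      (set_finite f hf _ (by omega))]
    simp
  · have hs : {i : ℕ | 1 ≤ i ∧ j ≤ fbar i} = {i : ℕ | 1 ≤ i ∧ j ≤ f i} := by
      ext i; simp only [Set.mem_setOf_eq, hfbar i]
      by_cases hir : i = r <;> simp [hir] <;> omega
    rw [if_neg (by omega)]
    simp [conjP, hs]

lemma support_lin (f : ℕ → ℕ) (hN : ∃ N, ∀ i, N ≤ i → f i = 0) :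
    (Function.support fun i : ℕ => (i : ℤ) * (f i : ℤ)).Finite := by
  obtain ⟨N, hN⟩ := hN
  apply Set.Finite.subset (Set.finite_Iio N)
  intro i hi
  simp only [Set.mem_Iio]
  by_contra h
  exact hi (by simp [hN i (by omega)])

lemma support_sq (f : ℕ → ℕ) (hf : IsPartition f) :
    (Function.support fun j : ℕ => ((conjP f j : ℤ)) ^ 2).Finite := by
  apply Set.Finite.subset (Set.finite_Iio (f 1 + 1))
  intro j hj
  simp only [Set.mem_Iio]
  by_contra h
  exact hj (by simp [conj_eventually_zero f hf j (by omega)])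

lemma support_sq_bar (f : ℕ → ℕ) (hf : IsPartition f) (r : ℕ) (hr : 1 ≤ r)
    (fbar : ℕ → ℕ) (hfbar : ∀ i, fbar i = if i = r then f i + 1 else f i) :
    (Function.support fun j : ℕ => ((conjP fbar j : ℤ)) ^ 2).Finite := by
  apply Set.Finite.subset (Set.finite_Iio (f 1 + f r + 2))
  intro j hj
  simp only [Set.mem_Iio]
  by_contra h
  apply hj
  show ((conjP fbar j : ℤ)) ^ 2 = 0
  rw [conj_bar f hf r hr fbar hfbar j, if_neg (by omega),
    conj_eventually_zero f hf j (by omega)]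
  simp

lemma dP_add (f : ℕ → ℕ) (hf : IsPartition f) (r : ℕ) (hr : 1 ≤ r)
    (hconj : conjP f (f r + 1) = r - 1)
    (fbar : ℕ → ℕ) (hfbar : ∀ i, fbar i = if i = r then f i + 1 else f i) :
    dP fbar - dP f = (r : ℤ) - 1 := by
  have hNf : ∃ N, ∀ i, N ≤ i → f i = 0 := hf.2.2
  have hNfbar : ∃ N, ∀ i, N ≤ i → fbar i = 0 := by
    obtain ⟨N, hN⟩ := hNf
    exact ⟨N + r + 1, fun i hi => by rw [hfbar i, if_neg (by omega), hN i (by omega)]⟩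
  have hA : (∑ᶠ j : ℕ, (conjP fbar j : ℤ) ^ 2) - ∑ᶠ j : ℕ, (conjP f j : ℤ) ^ 2
      = (conjP fbar (f r + 1) : ℤ) ^ 2 - (conjP f (f r + 1) : ℤ) ^ 2 := by
    rw [← finsum_sub_distrib (support_sq_bar f hf r hr fbar hfbar) (support_sq f hf)]
    apply finsum_eq_single
    intro j hj
    rw [conj_bar f hf r hr fbar hfbar j, if_neg hj]
    ring
  have hB : (∑ᶠ i : ℕ, (i : ℤ) * (fbar i : ℤ)) - ∑ᶠ i : ℕ, (i : ℤ) * (f i : ℤ)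
      = (r : ℤ) * (fbar r : ℤ) - (r : ℤ) * (f r : ℤ) := by
    rw [← finsum_sub_distrib (support_lin fbar hNfbar) (support_lin f hNf)]
    apply finsum_eq_single
    intro i hi
    rw [hfbar i, if_neg hi]
    ring
  have h1 : conjP fbar (f r + 1) = r := by
    rw [conj_bar f hf r hr fbar hfbar, if_pos rfl, hconj]; omega
  have h2 : fbar r = f r + 1 := by rw [hfbar r, if_pos rfl]
  have hd : dP fbar - dP f = ((conjP fbar (f r + 1) : ℤ) ^ 2 - (conjP f (f r + 1) : ℤ) ^ 2)
      - ((r : ℤ) * (fbar r : ℤ) - (r : ℤ) * (f r : ℤ)) := by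
    rw [dP, dP, ← hA, ← hB]; ring
  rw [hd, h1, h2, hconj]
  have hc : ((r - 1 : ℕ) : ℤ) = (r : ℤ) - 1 := by
    rw [Nat.cast_sub hr]; simp
  rw [hc]
  push_cast
  ring

/-- Let `λ ⊆ μ` be partitions, `(r,c)` an addable corner of `λ` with
`(r,c)`, `(r+1,c)`, `(r,c+1)` in the diagram of `μ` and `(r+1,c+1)` an addable corner
of `μ`.  If `λ̄` is `λ` with `(r,c)` added and `μ̄` is `μ` with `(r+1,c+1)` added, then
`(d_{μ̄} − d_μ) − (d_{λ̄} − d_λ) = 1`. -/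
theorem dP_add_corner_diff
    (f m : ℕ → ℕ) (hf : IsPartition f) (hm : IsPartition m) (hsub : ∀ i, f i ≤ m i)
    (r c : ℕ) (hr : 1 ≤ r) (hc : 1 ≤ c)
    (hfr : f r = c - 1) (hfc : conjP f c = r - 1)
    (hm1 : InDiagram m (r, c)) (hm2 : InDiagram m (r + 1, c)) (hm3 : InDiagram m (r, c + 1))
    (hmr : m (r + 1) = c) (hmc : conjP m (c + 1) = r)
    (fbar mbar : ℕ → ℕ)
    (hfbar : ∀ i, fbar i = if i = r then f i + 1 else f i)
    (hmbar : ∀ i, mbar i = if i = r + 1 then m i + 1 else m i) :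
    (dP mbar - dP m) - (dP fbar - dP f) = 1 := by
  have hF : dP fbar - dP f = (r : ℤ) - 1 := by
    apply dP_add f hf r hr _ fbar hfbar
    rw [(by omega : f r + 1 = c)]; exact hfc
  have hM : dP mbar - dP m = ((r + 1 : ℕ) : ℤ) - 1 := by
    apply dP_add m hm (r + 1) (by omega) _ mbar hmbar
    rw [hmr]; exact hmc ▸ (by omega)
  rw [hF, hM]
  push_cast
  ring
end

section
/- Let λ be a partition and suppose (r,c) is an addable corner of λ (λ_r = c − 1 and λ'_c = r − 1). Let λ̄ be λ with the cell (r,c) added. Then there is an equality of multisets of integers: hooks(λ̄) + {λ_i − c + r − i : 1 ≤ i ≤ r−1} + {λ'_j − r + c − j : 1 ≤ j ≤ c−1} = hooks(λ) + {λ_i − c + r − i + 1 : 1 ≤ i ≤ r−1} + {λ'_j − r + c − j + 1 : 1 ≤ j ≤ c−1} + {1}. -/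
theorem Finset.val_eq_filter_add_filter_add_filter_not {α : Type*} (s : Finset α)
    (p q : α → Prop) [DecidablePred p] [DecidablePred q] (hpq : ∀ a ∈ s, p a → ¬q a) :
    s.val = (s.filter p).val + (s.filter q).val + (s.filter fun a => ¬p a ∧ ¬q a).val := by
  have hq : (s.filter q).val = (s.val.filter fun a => ¬p a).filter q := by
    rw [Multiset.filter_filter, Finset.filter_val]
    exact Multiset.filter_congr fun a ha => ⟨fun h => ⟨h, fun hp => hpq a ha hp h⟩, And.left⟩
  have hrest : (s.filter fun a => ¬p a ∧ ¬q a).val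
      = (s.val.filter fun a => ¬p a).filter fun a => ¬q a := by
    rw [Multiset.filter_filter, Finset.filter_val]
    exact Multiset.filter_congr fun a _ => and_comm
  rw [hq, hrest, Finset.filter_val, add_assoc, Multiset.filter_add_not, Multiset.filter_add_not]

theorem IsPartition.antitoneOn_s16 {f : ℕ → ℕ} (hf : IsPartition f) : AntitoneOn f {i | 1 ≤ i} :=
  antitoneOn_nat_Ici_of_succ_le hf.2.1

theorem IsPartition.le_conjP_iff_s16 {f : ℕ → ℕ} (hf : IsPartition f) {i j : ℕ} (hi : 1 ≤ i)
    (hj : 1 ≤ j) : i ≤ conjP f j ↔ j ≤ f i := by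
  have hex : ∃ m, f (m + 1) < j := by
    obtain ⟨N, hN⟩ := hf.2.2
    exact ⟨N, by rw [hN _ (Nat.le_succ N)]; exact hj⟩
  set m := Nat.find hex
  have hrows : {k : ℕ | 1 ≤ k ∧ j ≤ f k} = Set.Icc 1 m := by
    ext k
    simp only [Set.mem_ofPred_eq, Set.mem_Icc, and_congr_right_iff]
    intro hk
    constructor
    · intro hjk
      by_contra! hmk
      exact (Nat.find_spec hex).not_ge (hjk.trans (hf.antitoneOn_s16 (by simp) hk hmk))
    · intro hkm
      simpa [Nat.sub_add_cancel hk] using Nat.find_min hex (show k - 1 < m by omega)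
  have hm : conjP f j = m := by
    rw [conjP, hrows, Set.ncard_Icc_nat]
    omega
  simpa [hm, hi] using (Set.ext_iff.1 hrows i).symm

noncomputable def cellsP (f : ℕ → ℕ) : Finset (ℕ × ℕ) :=
  ((Finset.Icc 1 (conjP f 1)) ×ˢ (Finset.Icc 1 (f 1))).filter fun p => p.2 ≤ f p.1

noncomputable def hookLengthP (f : ℕ → ℕ) (p : ℕ × ℕ) : ℤ :=
  (f p.1 : ℤ) - (p.2 : ℤ) + (conjP f p.2 : ℤ) - (p.1 : ℤ) + 1

theorem hooksP_eq_map_cellsP (f : ℕ → ℕ) : hooksP f = (cellsP f).val.map (hookLengthP f) :=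
  rfl

theorem IsPartition.mem_cellsP {f : ℕ → ℕ} (hf : IsPartition f) {p : ℕ × ℕ} :
    p ∈ cellsP f ↔ 1 ≤ p.1 ∧ 1 ≤ p.2 ∧ p.2 ≤ f p.1 := by
  simp only [cellsP, Finset.mem_filter, Finset.mem_product, Finset.mem_Icc]
  constructor
  · rintro ⟨⟨⟨h1, -⟩, h2, -⟩, h3⟩
    exact ⟨h1, h2, h3⟩
  · rintro ⟨h1, h2, h3⟩
    exact ⟨⟨⟨h1, (hf.le_conjP_iff_s16 h1 le_rfl).2 (h2.trans h3)⟩, h2,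
      h3.trans (hf.antitoneOn_s16 (le_refl 1) h1 h1)⟩, h3⟩

theorem conjP_congr {f g : ℕ → ℕ} {j : ℕ} (h : ∀ i, 1 ≤ i → (j ≤ f i ↔ j ≤ g i)) :
    conjP f j = conjP g j := by
  unfold conjP
  congr 1
  ext i
  simp only [Set.mem_ofPred_eq, and_congr_right_iff]
  exact h i

structure IsAddableCorner (f : ℕ → ℕ) (r c : ℕ) : Prop where
  one_le_row : 1 ≤ r
  one_le_col : 1 ≤ c
  apply_row : f r = c - 1
  conjP_col : conjP f c = r - 1

namespace IsAddableCorner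

variable {f : ℕ → ℕ} {r c : ℕ}

theorem isPartition_update (hf : IsPartition f) (h : IsAddableCorner f r c) :
    IsPartition (Function.update f r c) := by
  obtain ⟨hr, hc, hfr, hfc⟩ := h
  refine ⟨by simp [Function.update_of_ne (show 0 ≠ r by omega), hf.1], fun i hi => ?_, ?_⟩
  · have hstep := hf.2.1 i hi
    have hprev : r - 1 ≤ conjP f c := hfc.ge
    simp only [Function.update_apply]
    split_ifs with hsucc hir hir
    · omega
    · subst hsucc
      exact (hf.le_conjP_iff_s16 hi hc).1 (by omega)
    · subst hir
      omega
    · exact hstep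
  · obtain ⟨N, hN⟩ := hf.2.2
    exact ⟨max N (r + 1), fun i hi => by
      rw [Function.update_of_ne (by omega)]
      exact hN i (le_of_max_le_left hi)⟩

theorem conjP_update_of_ne (h : IsAddableCorner f r c) {j : ℕ} (hj : j ≠ c) :
    conjP (Function.update f r c) j = conjP f j := by
  refine conjP_congr fun i _ => ?_
  rcases eq_or_ne i r with rfl | hi
  · rw [Function.update_self, h.apply_row]
    omega
  · rw [Function.update_of_ne hi]

theorem conjP_update_self (hf : IsPartition f) (h : IsAddableCorner f r c) :
    conjP (Function.update f r c) c = r := by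
  have hg := h.isPartition_update hf
  have hr : r ≤ conjP (Function.update f r c) c :=
    (hg.le_conjP_iff_s16 h.one_le_row h.one_le_col).2 (by simp)
  have hr' : ¬r + 1 ≤ conjP (Function.update f r c) c := by
    rw [hg.le_conjP_iff_s16 (by omega) h.one_le_col, Function.update_of_ne (by omega)]
    have := hf.2.1 r h.one_le_row
    have := h.apply_row
    have := h.one_le_col
    omega
  omega

theorem notMem_cellsP (hf : IsPartition f) (h : IsAddableCorner f r c) : (r, c) ∉ cellsP f := by
  rw [hf.mem_cellsP, h.apply_row]
  omega

theorem cellsP_update (hf : IsPartition f) (h : IsAddableCorner f r c) :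
    cellsP (Function.update f r c) = insert (r, c) (cellsP f) := by
  ext ⟨i, j⟩
  rw [(h.isPartition_update hf).mem_cellsP, Finset.mem_insert, hf.mem_cellsP, Prod.mk.injEq]
  dsimp only
  rcases eq_or_ne i r with rfl | hi
  · rw [Function.update_self, h.apply_row]
    have := h.one_le_row
    have := h.one_le_col
    omega
  · simp [hi]

theorem filter_cellsP_row (hf : IsPartition f) (h : IsAddableCorner f r c) :
    (cellsP f).filter (fun p => p.1 = r) = (Finset.Icc 1 (c - 1)).map (.sectR r ℕ) := by
  ext ⟨i, j⟩
  simp only [Finset.mem_filter, hf.mem_cellsP, Finset.mem_map, Finset.mem_Icc,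
    Function.Embedding.sectR_apply, Prod.mk.injEq]
  constructor
  · rintro ⟨⟨-, hj, hji⟩, rfl⟩
    exact ⟨j, ⟨hj, h.apply_row ▸ hji⟩, rfl, rfl⟩
  · rintro ⟨j, ⟨hj, hjc⟩, rfl, rfl⟩
    exact ⟨⟨h.one_le_row, hj, h.apply_row ▸ hjc⟩, rfl⟩

theorem filter_cellsP_col (hf : IsPartition f) (h : IsAddableCorner f r c) :
    (cellsP f).filter (fun p => p.2 = c) = (Finset.Icc 1 (r - 1)).map (.sectL ℕ c) := by
  ext ⟨i, j⟩
  simp only [Finset.mem_filter, hf.mem_cellsP, Finset.mem_map, Finset.mem_Icc,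
    Function.Embedding.sectL_apply, Prod.mk.injEq]
  constructor
  · rintro ⟨⟨hi, -, hci⟩, rfl⟩
    exact ⟨i, ⟨hi, h.conjP_col ▸ (hf.le_conjP_iff_s16 hi h.one_le_col).2 hci⟩, rfl, rfl⟩
  · rintro ⟨i, ⟨hi, hir⟩, rfl, rfl⟩
    exact ⟨⟨hi, h.one_le_col, (hf.le_conjP_iff_s16 hi h.one_le_col).1 (h.conjP_col ▸ hir)⟩, rfl⟩

theorem map_cellsP_eq_row_add_col_add_rest {β : Type*} (hf : IsPartition f)
    (h : IsAddableCorner f r c) (φ : ℕ × ℕ → β) :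
    (cellsP f).val.map φ = (Finset.Icc 1 (c - 1)).val.map (fun j => φ (r, j))
      + (Finset.Icc 1 (r - 1)).val.map (fun i => φ (i, c))
      + ((cellsP f).filter fun p => ¬p.1 = r ∧ ¬p.2 = c).val.map φ := by
  have hdisj : ∀ p ∈ cellsP f, p.1 = r → ¬p.2 = c := fun p hp hpr hpc =>
    h.notMem_cellsP hf (by rwa [← hpr, ← hpc])
  rw [(cellsP f).val_eq_filter_add_filter_add_filter_not _ _ hdisj, Multiset.map_add,
    Multiset.map_add, h.filter_cellsP_row hf, h.filter_cellsP_col hf, Finset.map_val,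
    Finset.map_val, Multiset.map_map, Multiset.map_map]
  rfl

theorem hookLengthP_row (h : IsAddableCorner f r c) (j : ℕ) :
    hookLengthP f (r, j) = (conjP f j : ℤ) - r + c - j := by
  rw [hookLengthP, h.apply_row, Nat.cast_sub h.one_le_col]
  push_cast
  ring

theorem hookLengthP_col (h : IsAddableCorner f r c) (i : ℕ) :
    hookLengthP f (i, c) = (f i : ℤ) - c + r - i := by
  rw [hookLengthP, h.conjP_col, Nat.cast_sub h.one_le_row]
  push_cast
  ring

theorem hookLengthP_update_row (h : IsAddableCorner f r c) {j : ℕ} (hj : j ≠ c) :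
    hookLengthP (Function.update f r c) (r, j) = (conjP f j : ℤ) - r + c - j + 1 := by
  rw [hookLengthP, Function.update_self, h.conjP_update_of_ne hj]
  ring

theorem hookLengthP_update_col (hf : IsPartition f) (h : IsAddableCorner f r c) {i : ℕ}
    (hi : i ≠ r) :
    hookLengthP (Function.update f r c) (i, c) = (f i : ℤ) - c + r - i + 1 := by
  rw [hookLengthP, Function.update_of_ne hi, h.conjP_update_self hf]

theorem hookLengthP_update_corner (hf : IsPartition f) (h : IsAddableCorner f r c) :
    hookLengthP (Function.update f r c) (r, c) = 1 := by
  rw [hookLengthP, Function.update_self, h.conjP_update_self hf]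
  dsimp only
  ring

theorem hookLengthP_update_of_ne (h : IsAddableCorner f r c) {p : ℕ × ℕ} (hpr : p.1 ≠ r)
    (hpc : p.2 ≠ c) : hookLengthP (Function.update f r c) p = hookLengthP f p := by
  rw [hookLengthP, hookLengthP, Function.update_of_ne hpr, h.conjP_update_of_ne hpc]

theorem hooksP_eq_row_add_col_add_rest (hf : IsPartition f) (h : IsAddableCorner f r c) :
    hooksP f = (Finset.Icc 1 (c - 1)).val.map (fun j => (conjP f j : ℤ) - r + c - j)
      + (Finset.Icc 1 (r - 1)).val.map (fun i => (f i : ℤ) - c + r - i)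
      + ((cellsP f).filter fun p => ¬p.1 = r ∧ ¬p.2 = c).val.map (hookLengthP f) := by
  simp only [hooksP_eq_map_cellsP, h.map_cellsP_eq_row_add_col_add_rest hf, h.hookLengthP_row,
    h.hookLengthP_col]

theorem hooksP_update_eq_cons_row_add_col_add_rest (hf : IsPartition f) (h : IsAddableCorner f r c) :
    hooksP (Function.update f r c) = 1 ::ₘ
      ((Finset.Icc 1 (c - 1)).val.map (fun j => (conjP f j : ℤ) - r + c - j + 1)
      + (Finset.Icc 1 (r - 1)).val.map (fun i => (f i : ℤ) - c + r - i + 1)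
      + ((cellsP f).filter fun p => ¬p.1 = r ∧ ¬p.2 = c).val.map (hookLengthP f)) := by
  rw [hooksP_eq_map_cellsP, h.cellsP_update hf, Finset.insert_val_of_notMem (h.notMem_cellsP hf),
    Multiset.map_cons, h.hookLengthP_update_corner hf, h.map_cellsP_eq_row_add_col_add_rest hf]
  congr 2
  · congr 1
    · refine Multiset.map_congr rfl fun j hj => h.hookLengthP_update_row ?_
      rw [Finset.mem_val, Finset.mem_Icc] at hj
      omega
    · refine Multiset.map_congr rfl fun i hi => h.hookLengthP_update_col hf ?_
      rw [Finset.mem_val, Finset.mem_Icc] at hi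
      omega
  · refine Multiset.map_congr rfl fun p hp => ?_
    obtain ⟨hpr, hpc⟩ := (Finset.mem_filter.1 hp).2
    exact h.hookLengthP_update_of_ne hpr hpc

end IsAddableCorner

/-- If `(r,c)` is an addable corner of the partition `λ` and `λ̄` is
`λ` with the cell `(r,c)` added, then the multisets of hook lengths satisfy:
`hooks(λ̄) + {λ_i − c + r − i : 1 ≤ i ≤ r−1} + {λ'_j − r + c − j : 1 ≤ j ≤ c−1}
  = hooks(λ) + {λ_i − c + r − i + 1 : 1 ≤ i ≤ r−1} + {λ'_j − r + c − j + 1 : 1 ≤ j ≤ c−1} + {1}`. -/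
theorem hooks_add_corner
    (f : ℕ → ℕ) (hf : IsPartition f) (r c : ℕ) (hr : 1 ≤ r) (hc : 1 ≤ c)
    (hfr : f r = c - 1) (hfc : conjP f c = r - 1)
    (g : ℕ → ℕ) (hg : ∀ i, g i = if i = r then f i + 1 else f i) :
    hooksP g
        + (Finset.Icc 1 (r - 1)).val.map
            (fun i => (f i : ℤ) - (c : ℤ) + (r : ℤ) - (i : ℤ))
        + (Finset.Icc 1 (c - 1)).val.map
            (fun j => (conjP f j : ℤ) - (r : ℤ) + (c : ℤ) - (j : ℤ)) =
      hooksP f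
        + (Finset.Icc 1 (r - 1)).val.map
            (fun i => (f i : ℤ) - (c : ℤ) + (r : ℤ) - (i : ℤ) + 1)
        + (Finset.Icc 1 (c - 1)).val.map
            (fun j => (conjP f j : ℤ) - (r : ℤ) + (c : ℤ) - (j : ℤ) + 1)
        + {(1 : ℤ)} := by
  have hcorner : IsAddableCorner f r c := ⟨hr, hc, hfr, hfc⟩
  obtain rfl : g = Function.update f r c := funext fun i => by
    rw [hg, Function.update_apply]
    split_ifs with hi
    · rw [hi, hfr]
      omega
    · rfl
  rw [hcorner.hooksP_update_eq_cons_row_add_col_add_rest hf,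
    hcorner.hooksP_eq_row_add_col_add_rest hf, ← Multiset.singleton_add]
  abel
end
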